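/- arXiv:1105.3399 — 6 statements merged into one kernel-verified Lean document; each statement's English description precedes it below -/
import Mathlib

section
/- For every natural number n, the integral over [-π, π] of cos(2nx)/(2 + sin²x) with respect to x equals π·(−c(n) + d(n)·√(2/3)), where c and d are the integer sequences defined by c(0) = 0, c(1) = 4, c(n) = 10·c(n−1) − c(n−2), and d(0) = 1, d(1) = 5, d(n) = 10·d(n−1) − d(n−2). -/
open Real intervalIntegral

/-!
Put `Iₙ = ∫_{-π}^{π} cos (2nx) / (2 + sin² x) dx`. Since `cos 2x = 5 - 2 (2 + sin² x)` and
`cos 2(n+2)x + cos 2nx = 2 cos 2x cos 2(n+1)x`, and `cos 2(n+1)x` integrates to zero over a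
period, `I_{n+2} = 10 I_{n+1} - I_n`: the integrals obey the recurrence of `c` and `d`.
The initial values are `I₁ = 5 I₀ - 4π` and `I₀ = π √(2/3)`, an instance of
`∫_{-π}^{π} dx / (1 + b sin² x) = 2π / √(1 + b)`.
-/

theorem eq_of_linear_recurrence {R : Type*} [Semiring R] (a b : R) {u v : ℕ → R}
    (hu : ∀ n, u (n + 2) = a * u (n + 1) + b * u n)
    (hv : ∀ n, v (n + 2) = a * v (n + 1) + b * v n)
    (h0 : u 0 = v 0) (h1 : u 1 = v 1) : u = v := by
  funext n
  induction n using Nat.twoStepInduction with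
  | zero => exact h0
  | one => exact h1
  | more n ih₀ ih₁ => rw [hu, hv, ih₀, ih₁]

lemma one_add_sub_one_mul_sin_sq_pos {k : ℝ} (hk : 0 < k) (x : ℝ) :
    0 < 1 + (k - 1) * sin x ^ 2 := by
  nlinarith [sin_sq_add_cos_sq x, sq_nonneg (cos x), mul_nonneg hk.le (sq_nonneg (sin x))]

/-- A form of `arctan (k tan x)`, continuous on all of `ℝ`: the arctan term is
`arctan (k tan x) - x`, by the subtraction formula for `tan`. -/
theorem hasDerivAt_add_arctan {k : ℝ} (hk : 0 < k) (x : ℝ) :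
    HasDerivAt (fun x => x + arctan ((k - 1) * sin x * cos x / (1 + (k - 1) * sin x ^ 2)))
      (k / (1 + (k ^ 2 - 1) * sin x ^ 2)) x := by
  have hP := one_add_sub_one_mul_sin_sq_pos hk x
  have hQ := one_add_sub_one_mul_sin_sq_pos (pow_pos hk 2) x
  have hpy := sin_sq_add_cos_sq x
  have hu := (((hasDerivAt_sin x).const_mul (k - 1)).mul (hasDerivAt_cos x)).div
    (((hasDerivAt_sin x).pow 2).const_mul (k - 1) |>.const_add 1) hP.ne'
  refine ((hasDerivAt_id x).add hu.arctan).congr_deriv ?_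
  simp only [Pi.mul_apply, Pi.div_apply, Pi.pow_apply]
  generalize sin x = s, cos x = c at hP hQ hpy ⊢
  have h_one_add_sq : 1 + ((k - 1) * s * c / (1 + (k - 1) * s ^ 2)) ^ 2
      = (1 + (k ^ 2 - 1) * s ^ 2) / (1 + (k - 1) * s ^ 2) ^ 2 := by
    field_simp
    linear_combination (k - 1) ^ 2 * s ^ 2 * hpy
  rw [h_one_add_sq, one_div_div, div_mul_div_comm, mul_comm _ (_ - _),
    mul_div_mul_right _ _ (pow_ne_zero 2 hP.ne'), eq_div_iff hQ.ne', add_mul,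
    div_mul_cancel₀ _ hQ.ne']
  linear_combination (k - 1) * (1 - (k - 1) * s ^ 2) * hpy

theorem integral_one_div_one_add_mul_sin_sq {b : ℝ} (hb : -1 < b) :
    ∫ x in (-π)..π, 1 / (1 + b * sin x ^ 2) = 2 * π / √(1 + b) := by
  set k := √(1 + b)
  have hk : 0 < k := sqrt_pos.2 (by linarith)
  have hb' : b = k ^ 2 - 1 := by rw [sq_sqrt (by linarith)]; ring
  have hcont : Continuous fun x => k / (1 + (k ^ 2 - 1) * sin x ^ 2) :=
    continuous_const.div (by fun_prop) fun x =>
      (one_add_sub_one_mul_sin_sq_pos (pow_pos hk 2) x).ne'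
  have hF := integral_eq_sub_of_hasDerivAt (fun x _ => hasDerivAt_add_arctan hk x)
    (hcont.intervalIntegrable (-π) π)
  simp only [sin_neg, sin_pi, neg_zero, mul_zero, zero_mul, zero_div, arctan_zero, add_zero] at hF
  simp_rw [div_eq_mul_one_div k] at hF
  rw [integral_const_mul] at hF
  rw [hb', eq_div_iff hk.ne']
  linarith

theorem integral_one_div_two_add_sin_sq :
    ∫ x in (-π)..π, 1 / (2 + sin x ^ 2) = π * √(2 / 3) := by
  have h : ∀ x, 1 / (2 + sin x ^ 2) = 2⁻¹ * (1 / (1 + 2⁻¹ * sin x ^ 2)) := fun x => by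
    field_simp
  simp_rw [h]
  rw [integral_const_mul, integral_one_div_one_add_mul_sin_sq (by norm_num),
    show (2 / 3 : ℝ) = (1 + 2⁻¹)⁻¹ by norm_num, sqrt_inv]
  ring

theorem integral_cos_int_mul {m : ℤ} (hm : m ≠ 0) : ∫ x in (-π)..π, cos (m * x) = 0 := by
  rw [integral_comp_mul_left (fun x => cos x) (Int.cast_ne_zero.2 hm), integral_cos, mul_neg,
    sin_neg, sin_int_mul_pi, neg_zero, sub_zero, smul_zero]

lemma cos_two_mul_eq_five_sub (x : ℝ) : cos (2 * x) = 5 - 2 * (2 + sin x ^ 2) := by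
  rw [cos_two_mul, cos_sq']
  ring

lemma continuous_cos_mul_div_two_add_sin_sq (r : ℝ) :
    Continuous fun x => cos (r * x) / (2 + sin x ^ 2) :=
  (by fun_prop : Continuous fun x => cos (r * x)).div (by fun_prop) fun x => by positivity

noncomputable def cosMomentIntegral (n : ℕ) : ℝ :=
  ∫ x in (-π)..π, cos (2 * n * x) / (2 + sin x ^ 2)

lemma cosMomentIntegral_zero : cosMomentIntegral 0 = π * √(2 / 3) := by
  simp only [cosMomentIntegral, Nat.cast_zero, mul_zero, zero_mul, cos_zero,
    integral_one_div_two_add_sin_sq]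

lemma cosMomentIntegral_one : cosMomentIntegral 1 = π * (-4 + 5 * √(2 / 3)) := by
  have h : ∀ x, cos (2 * (1 : ℕ) * x) / (2 + sin x ^ 2) = 5 * (1 / (2 + sin x ^ 2)) - 2 :=
    fun x => by
      rw [Nat.cast_one, mul_one, cos_two_mul_eq_five_sub]
      field_simp
  rw [cosMomentIntegral, integral_congr fun x _ => h x, integral_sub _ intervalIntegrable_const,
    integral_const_mul, integral_one_div_two_add_sin_sq, integral_const, smul_eq_mul]
  · ring
  · exact ((continuous_const.div (by fun_prop) fun x => by positivity).intervalIntegrable _ _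
      ).const_mul 5

lemma cosMomentIntegral_add_two (n : ℕ) :
    cosMomentIntegral (n + 2) = 10 * cosMomentIntegral (n + 1) - cosMomentIntegral n := by
  have hcos : ∫ x in (-π)..π, cos (2 * (n + 1 : ℝ) * x) = 0 := by
    simpa using integral_cos_int_mul (m := 2 * (n + 1)) (by omega)
  have h : ∀ x, cos (2 * (n + 2 : ℝ) * x) / (2 + sin x ^ 2) + cos (2 * n * x) / (2 + sin x ^ 2)
      = 10 * (cos (2 * (n + 1 : ℝ) * x) / (2 + sin x ^ 2)) - 4 * cos (2 * (n + 1 : ℝ) * x) :=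
    fun x => by
      have e : cos (2 * (n + 2 : ℝ) * x) + cos (2 * n * x)
          = 2 * cos (2 * (n + 1 : ℝ) * x) * cos (2 * x) := by
        rw [cos_add_cos]
        ring_nf
      rw [← add_div, e, cos_two_mul_eq_five_sub]
      field_simp
      ring
  have hi (r : ℝ) :
      IntervalIntegrable (fun x => cos (r * x) / (2 + sin x ^ 2)) MeasureTheory.volume (-π) π :=
    (continuous_cos_mul_div_two_add_sin_sq r).intervalIntegrable _ _
  have hi' :
      IntervalIntegrable (fun x => 4 * cos (2 * (n + 1 : ℝ) * x)) MeasureTheory.volume (-π) π :=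
    (by fun_prop : Continuous fun x => 4 * cos (2 * (n + 1 : ℝ) * x)).intervalIntegrable _ _
  simp only [cosMomentIntegral]
  push_cast
  rw [eq_sub_iff_add_eq, ← integral_add (hi _) (hi _), integral_congr fun x _ => h x,
    integral_sub ((hi _).const_mul _) hi',
    integral_const_mul, integral_const_mul, hcos, mul_zero, sub_zero]

theorem stmt_0 (c d : ℕ → ℤ)
    (hc0 : c 0 = 0) (hc1 : c 1 = 4)
    (hc : ∀ n, c (n + 2) = 10 * c (n + 1) - c n)
    (hd0 : d 0 = 1) (hd1 : d 1 = 5)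
    (hd : ∀ n, d (n + 2) = 10 * d (n + 1) - d n) :
    ∀ n : ℕ,
      ∫ x in (-π)..π, Real.cos (2 * n * x) / (2 + Real.sin x ^ 2)
        = π * (-(c n : ℝ) + (d n : ℝ) * Real.sqrt (2 / 3)) := by
  refine congrFun (eq_of_linear_recurrence (u := cosMomentIntegral)
    (v := fun n => π * (-(c n : ℝ) + d n * √(2 / 3))) 10 (-1)
    (fun n => ?_) (fun n => ?_) ?_ ?_)
  · rw [cosMomentIntegral_add_two]
    ring
  · rw [hc, hd]
    push_cast
    ring
  · rw [cosMomentIntegral_zero, hc0, hd0]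
    simp
  · rw [cosMomentIntegral_one, hc1, hd1]
    push_cast
    ring
end

section
/- For every integer n ≥ 2, the integral over [-π, π] of (10·cos(2(n−1)x) − cos(2(n−2)x) − cos(2nx))/(2 + sin²x) with respect to x equals 0. -/
/-! Since `cos (a - 2x) + cos (a + 2x) = 2 cos a cos 2x = 2 cos a (1 - 2 sin² x)`, the numerator
with `a = 2(n-1)x` equals `4 cos a · (2 + sin² x)`. The integrand is therefore `4 cos (2(n-1)x)`,
whose integral over a full period vanishes because `2(n-1)` is a nonzero integer. -/

open Real

theorem ten_mul_cos_sub_cos_sub_two_mul_sub_cos_add_two_mul (a t : ℝ) :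
    10 * cos a - cos (a - 2 * t) - cos (a + 2 * t) = 4 * cos a * (2 + sin t ^ 2) := by
  rw [cos_sub, cos_add, cos_two_mul, cos_sq']
  ring

theorem integral_cos_int_mul_eq_zero {k : ℤ} (hk : k ≠ 0) :
    ∫ x in (-π)..π, cos (k * x) = 0 := by
  rw [intervalIntegral.integral_comp_mul_left _ (Int.cast_ne_zero.mpr hk), integral_cos,
    mul_neg, sin_neg, sin_int_mul_pi]
  simp

theorem stmt_3 (n : ℤ) (hn : 2 ≤ n) :
    ∫ x in (-π)..π,
        (10 * Real.cos (2 * (n - 1) * x) - Real.cos (2 * (n - 2) * x)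
          - Real.cos (2 * n * x)) / (2 + Real.sin x ^ 2) = 0 := by
  have hintegrand : ∀ x : ℝ,
      (10 * cos (2 * (n - 1) * x) - cos (2 * (n - 2) * x) - cos (2 * n * x)) / (2 + sin x ^ 2)
        = 4 * cos (((2 * (n - 1) : ℤ) : ℝ) * x) := fun x => by
    have h := ten_mul_cos_sub_cos_sub_two_mul_sub_cos_add_two_mul (2 * (n - 1) * x) x
    rw [show (2 * (n - 1) * x - 2 * x : ℝ) = 2 * (n - 2) * x by ring,
      show (2 * (n - 1) * x + 2 * x : ℝ) = 2 * n * x by ring] at h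
    rw [h, mul_div_cancel_right₀ _ (by positivity)]
    push_cast
    rfl
  simp_rw [hintegrand, intervalIntegral.integral_const_mul]
  rw [integral_cos_int_mul_eq_zero (by omega), mul_zero]
end

section
/- For every real number k > 0, the integral over [-π, π] of 1/(k + sin²x) with respect to x equals 2π·√(1 + 1/k)/(1 + k), equivalently 2π/√(k(k+1)). -/
/-!
Since `k + sin² x = (2k + 1 - cos 2x) / 2`, the integrand is `2 / (a - cos 2x)` with `a = 2k + 1`.
For `a > 1` the function `1 / (a - cos u)` is a multiple of the Poisson kernel
`(t² - 1) / (t² - 2t cos u + 1)` with `t = a + √(a² - 1)`, which has the antiderivative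
`u - 2 arctan (sin u / (cos u - t))`, continuous on all of `ℝ` because `|t| > 1`. At multiples
of `π` the arctangent vanishes, so the integral over `[-π, π]` is
`4π / √((2k + 1)² - 1) = 2π / √(k (k + 1))`.
-/

open Real

theorem cos_ne_of_one_lt_abs {t : ℝ} (ht : 1 < |t|) (u : ℝ) : cos u ≠ t := by
  rintro rfl
  linarith [abs_cos_le_one u]

theorem sq_sub_two_mul_mul_cos_add_one (t u : ℝ) :
    t ^ 2 - 2 * t * cos u + 1 = (cos u - t) ^ 2 + sin u ^ 2 := by
  linear_combination -(sin_sq_add_cos_sq u)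

theorem hasDerivAt_arctan_sin_div_cos_sub {t : ℝ} (ht : 1 < |t|) (u : ℝ) :
    HasDerivAt (fun u => arctan (sin u / (cos u - t)))
      ((1 - t * cos u) / (t ^ 2 - 2 * t * cos u + 1)) u := by
  have hden : cos u - t ≠ 0 := sub_ne_zero.2 (cos_ne_of_one_lt_abs ht u)
  refine ((hasDerivAt_sin u).div ((hasDerivAt_cos u).sub_const t) hden).arctan.congr_deriv ?_
  rw [sq_sub_two_mul_mul_cos_add_one, Pi.div_apply]
  field_simp
  linear_combination sin_sq_add_cos_sq u

theorem hasDerivAt_sub_two_mul_arctan_sin_div_cos_sub {t : ℝ} (ht : 1 < |t|) (u : ℝ) :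
    HasDerivAt (fun u => u - 2 * arctan (sin u / (cos u - t)))
      ((t ^ 2 - 1) / (t ^ 2 - 2 * t * cos u + 1)) u := by
  have hden : t ^ 2 - 2 * t * cos u + 1 ≠ 0 := by
    have := sub_ne_zero.2 (cos_ne_of_one_lt_abs ht u)
    rw [sq_sub_two_mul_mul_cos_add_one]
    positivity
  refine ((hasDerivAt_id u).sub
    ((hasDerivAt_arctan_sin_div_cos_sub ht u).const_mul 2)).congr_deriv ?_
  rw [mul_div_assoc', one_sub_div hden]
  ring

noncomputable def invSubCosPrimitive (a u : ℝ) : ℝ :=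
  (u - 2 * arctan (sin u / (cos u - (a + √(a ^ 2 - 1))))) / √(a ^ 2 - 1)

theorem hasDerivAt_invSubCosPrimitive {a : ℝ} (ha : 1 < a) (u : ℝ) :
    HasDerivAt (invSubCosPrimitive a) (1 / (a - cos u)) u := by
  set s := √(a ^ 2 - 1)
  have hs : 0 < s := sqrt_pos.2 (by nlinarith)
  have hs2 : s ^ 2 = a ^ 2 - 1 := sq_sqrt (by nlinarith)
  have hac : 0 < a - cos u := by linarith [cos_le_one u]
  have ht : 1 < |a + s| := by rw [abs_of_pos (by positivity)]; linarith
  refine ((hasDerivAt_sub_two_mul_arctan_sin_div_cos_sub ht u).div_const s).congr_deriv ?_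
  have hden : (a + s) ^ 2 - 2 * (a + s) * cos u + 1 = 2 * (a + s) * (a - cos u) := by
    linear_combination hs2
  rw [hden]
  field_simp
  linear_combination -hs2

theorem invSubCosPrimitive_of_sin_eq_zero (a : ℝ) {u : ℝ} (hu : sin u = 0) :
    invSubCosPrimitive a u = u / √(a ^ 2 - 1) := by
  simp [invSubCosPrimitive, hu]

theorem integral_one_div_add_sin_sq {k : ℝ} (hk : 0 < k) :
    ∫ x in (-π)..π, 1 / (k + sin x ^ 2) = 2 * π / √(k * (k + 1)) := by
  have hderiv (x : ℝ) :
      HasDerivAt (fun x => invSubCosPrimitive (2 * k + 1) (2 * x)) (1 / (k + sin x ^ 2)) x := by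
    refine ((hasDerivAt_invSubCosPrimitive (by linarith) (2 * x)).comp x
      ((hasDerivAt_id x).const_mul 2)).congr_deriv ?_
    have hden : 2 * k + 1 - cos (2 * x) = 2 * (k + sin x ^ 2) := by
      rw [cos_two_mul, cos_sq']
      ring
    have : k + sin x ^ 2 ≠ 0 := by positivity
    rw [hden]
    field_simp
  have hcont : Continuous fun x => 1 / (k + sin x ^ 2) :=
    continuous_const.div (by fun_prop) fun x => by positivity
  have hsqrt : √((2 * k + 1) ^ 2 - 1) = 2 * √(k * (k + 1)) := by
    rw [show (2 * k + 1) ^ 2 - 1 = 2 ^ 2 * (k * (k + 1)) by ring, sqrt_mul (by norm_num),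
      sqrt_sq (by norm_num)]
  rw [intervalIntegral.integral_eq_sub_of_hasDerivAt (fun x _ => hderiv x)
      (hcont.intervalIntegrable _ _),
    invSubCosPrimitive_of_sin_eq_zero _ (by simp), invSubCosPrimitive_of_sin_eq_zero _ (by simp),
    hsqrt]
  field_simp
  ring

theorem sqrt_one_add_one_div_div_one_add {k : ℝ} (hk : 0 < k) :
    √(1 + 1 / k) / (1 + k) = 1 / √(k * (k + 1)) := by
  rw [show 1 + 1 / k = (k + 1) / k by field_simp, sqrt_div' _ hk.le, sqrt_mul hk.le]
  field_simp
  linear_combination sq_sqrt (show 0 ≤ k + 1 by linarith)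

theorem stmt_5 (k : ℝ) (hk : 0 < k) :
    (∫ x in (-π)..π, 1 / (k + Real.sin x ^ 2))
        = 2 * π * Real.sqrt (1 + 1 / k) / (1 + k)
      ∧ (∫ x in (-π)..π, 1 / (k + Real.sin x ^ 2))
        = 2 * π / Real.sqrt (k * (k + 1)) := by
  refine ⟨?_, integral_one_div_add_sin_sq hk⟩
  rw [integral_one_div_add_sin_sq hk, mul_div_assoc (2 * π), sqrt_one_add_one_div_div_one_add hk,
    mul_one_div]
end

section
/- For every real number k > 0, the integral over [-π, π] of cos(2x)/(k + sin²x) with respect to x equals π·(−4 + (2k+1)·2/√(k(k+1))). -/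
open Real

/-!
Since `k + sin² x = (a - cos 2x) / 2` with `a = 2k + 1 > 1`, the integrand is
`2a / (a - cos 2x) - 2`, and everything reduces to the classical integral of `1 / (a - cos θ)`.
With `b = a - √(a² - 1) ∈ (0, 1)` one has `a - cos θ = (1 - 2b cos θ + b²) / (2b)`, a multiple of
the Poisson kernel, whose antiderivative `θ + 2 arctan (b sin θ / (1 - b cos θ))` equals `θ`
wherever `sin θ = 0`; hence `∫ θ in u..v, 1 / (a - cos θ) = (v - u) / √(a² - 1)`
between any two such points.
-/

theorem one_sub_mul_cos_pos {b : ℝ} (hb : |b| < 1) (θ : ℝ) : 0 < 1 - b * cos θ := by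
  have : |b * cos θ| < 1 := by
    rw [abs_mul]; nlinarith [abs_cos_le_one θ, abs_nonneg b, abs_nonneg (cos θ)]
  linarith [le_abs_self (b * cos θ)]

-- Unlike `2 arctan (c tan (θ / 2))`, this primitive of the Poisson kernel has no jumps.
theorem hasDerivAt_add_two_mul_arctan {b : ℝ} (hb : |b| < 1) (θ : ℝ) :
    HasDerivAt (fun θ => θ + 2 * arctan (b * sin θ / (1 - b * cos θ)))
      ((1 - b ^ 2) / (1 - 2 * b * cos θ + b ^ 2)) θ := by
  have hden := one_sub_mul_cos_pos hb θ
  have hq : HasDerivAt (fun θ => b * sin θ / (1 - b * cos θ))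
      ((b * cos θ * (1 - b * cos θ) - b * sin θ * (b * sin θ)) / (1 - b * cos θ) ^ 2) θ :=
    (((hasDerivAt_sin θ).const_mul b).div
      ((hasDerivAt_cos θ).const_mul b |>.const_sub 1) hden.ne').congr_deriv (by ring)
  refine ((hasDerivAt_id' θ).add (hq.arctan.const_mul 2)).congr_deriv ?_
  have hsum : (1 - b * cos θ) ^ 2 + (b * sin θ) ^ 2 = 1 - 2 * b * cos θ + b ^ 2 := by
    linear_combination b ^ 2 * sin_sq_add_cos_sq θ
  rw [div_pow, one_add_div (by positivity), hsum]
  have hpos : 0 < 1 - 2 * b * cos θ + b ^ 2 := by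
    rw [← hsum]; positivity
  field_simp
  linear_combination (-2 * b ^ 2) * sin_sq_add_cos_sq θ

theorem integral_inv_sub_cos {a u v : ℝ} (ha : 1 < a) (hu : sin u = 0) (hv : sin v = 0) :
    ∫ θ in u..v, (a - cos θ)⁻¹ = (v - u) / √(a ^ 2 - 1) := by
  set s := √(a ^ 2 - 1)
  have hs2 : s ^ 2 = a ^ 2 - 1 := sq_sqrt (by nlinarith)
  have hs : 0 < s := sqrt_pos.2 (by nlinarith)
  have hsa : s < a := by nlinarith
  set b := a - s
  have hb0 : 0 < b := by linarith
  have hb : |b| < 1 := abs_lt.2 ⟨by linarith, by nlinarith⟩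
  have hcos (θ : ℝ) : 0 < a - cos θ := by linarith [cos_le_one θ]
  have hderiv (θ : ℝ) : HasDerivAt (fun θ => (θ + 2 * arctan (b * sin θ / (1 - b * cos θ))) / s)
      (a - cos θ)⁻¹ θ := by
    refine ((hasDerivAt_add_two_mul_arctan hb θ).div_const s).congr_deriv ?_
    have hfac : 1 - 2 * b * cos θ + b ^ 2 = 2 * b * (a - cos θ) := by
      linear_combination hs2
    have hnum : 1 - b ^ 2 = 2 * b * s := by linear_combination hs2
    rw [hfac, hnum]
    field_simp [(hcos θ).ne', hb0.ne']
  have hint : IntervalIntegrable (fun θ => (a - cos θ)⁻¹) MeasureTheory.volume u v :=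
    (continuous_const.sub continuous_cos).inv₀ (fun θ => (hcos θ).ne') |>.intervalIntegrable u v
  rw [intervalIntegral.integral_eq_sub_of_hasDerivAt (fun θ _ => hderiv θ) hint]
  simp only [hu, hv, mul_zero, zero_div, arctan_zero]
  ring

theorem stmt_6 (k : ℝ) (hk : 0 < k) :
    ∫ x in (-π)..π, Real.cos (2 * x) / (k + Real.sin x ^ 2)
      = π * (-4 + (2 * k + 1) * 2 / Real.sqrt (k * (k + 1))) := by
  set a := 2 * k + 1
  have ha : 1 < a := by linarith
  have hpos (x : ℝ) : 0 < a - cos (2 * x) := by linarith [cos_le_one (2 * x)]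
  have hsplit (x : ℝ) :
      cos (2 * x) / (k + sin x ^ 2) = 2 * a * (a - cos (2 * x))⁻¹ - 2 := by
    have hden : k + sin x ^ 2 = (a - cos (2 * x)) / 2 := by rw [sin_sq_eq_half_sub]; ring
    rw [hden]
    field_simp [(hpos x).ne']
    ring
  have hkernel : ∫ x in (-π)..π, (a - cos (2 * x))⁻¹ = 2 * π / √(a ^ 2 - 1) := by
    rw [intervalIntegral.integral_comp_mul_left (fun θ => (a - cos θ)⁻¹) two_ne_zero,
      integral_inv_sub_cos ha (by simp) (by simp), smul_eq_mul]
    ring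
  have hsqrt : √(a ^ 2 - 1) = 2 * √(k * (k + 1)) := by
    rw [show a ^ 2 - 1 = 2 ^ 2 * (k * (k + 1)) by ring, sqrt_mul (by norm_num),
      sqrt_sq zero_le_two]
  have hint : IntervalIntegrable (fun x => (a - cos (2 * x))⁻¹) MeasureTheory.volume (-π) π :=
    (continuous_const.sub (continuous_cos.comp (continuous_const_mul 2))).inv₀
      (fun x => (hpos x).ne') |>.intervalIntegrable _ _
  simp_rw [hsplit]
  rw [intervalIntegral.integral_sub (hint.const_mul _) intervalIntegrable_const,
    intervalIntegral.integral_const_mul, hkernel, intervalIntegral.integral_const, hsqrt]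
  have hroot : 0 < √(k * (k + 1)) := by positivity
  field_simp
  ring
end

section
/- For every real number k > 0 and every natural number n ≥ 1, the integral over [-π, π] of cos(nx)/(k + sin²x) with respect to x equals ((−1)ⁿ + 1)/2 · π · ( −((2k+1 + 2√(k(k+1)))^⌊n/2⌋ − (2k+1 − 2√(k(k+1)))^⌊n/2⌋)/√(k(k+1)) + cosh(2⌊n/2⌋·arsinh(√k))·2/√(k(k+1)) ). -/
/-!
For odd `n` the integrand changes sign under `x ↦ x + π`, so the integral vanishes. For `n = 2m`,
`k + sin² x = (2k + 1 - cos 2x) / 2` and the substitution `u = 2x` (harmless by periodicity)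
reduces the integral to the Poisson-type integral `∫_{-π}^{π} cos (m u) / (c - cos u) du` with
`c = 2k + 1`. These integrals satisfy the recurrence `I (m + 2) = 2c I (m + 1) - I m`, whose
decaying characteristic root is `r = c - √(c² - 1)`; hence `I m = rᵐ I 0` and
`I 0 = 2π / √(c² - 1)`. Finally `exp (2 arsinh √k) = 2k + 1 + 2√(k(k + 1)) = 1 / r`, which
turns the `cosh` term of the closed form into `(r⁻ᵐ + rᵐ) / 2`.
-/

open Real intervalIntegral
open MeasureTheory (volume)

theorem eq_pow_mul_of_recurrence {R : Type*} [CommRing R] {u : ℕ → R} {p q r : R}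
    (hr : r ^ 2 = p * r + q) (h1 : u 1 = r * u 0)
    (hu : ∀ m, u (m + 2) = p * u (m + 1) + q * u m) (m : ℕ) : u m = r ^ m * u 0 := by
  induction m using Nat.twoStepInduction with
  | zero => simp
  | one => simpa using h1
  | more m ih₀ ih₁ =>
    rw [hu, ih₀, ih₁]
    linear_combination -(r ^ m * u 0) * hr

theorem Function.Antiperiodic.intervalIntegral_add_two_mul_eq_zero {E : Type*}
    [NormedAddCommGroup E] [NormedSpace ℝ E] {f : ℝ → E} {T : ℝ}
    (hf : Function.Antiperiodic f T) (h_int : ∀ t₁ t₂, IntervalIntegrable f volume t₁ t₂)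
    (t : ℝ) : ∫ x in t..t + 2 * T, f x = 0 := by
  have hshift : ∫ x in t + T..t + 2 * T, f x = -∫ x in t..t + T, f x := by
    rw [show t + 2 * T = t + T + T by ring, ← integral_comp_add_right,
      ← intervalIntegral.integral_neg]
    simp only [hf _]
  rw [← integral_add_adjacent_intervals (h_int t (t + T)) (h_int _ _), hshift, add_neg_cancel]

theorem Function.Periodic.intervalIntegral_comp_nat_mul {E : Type*}
    [NormedAddCommGroup E] [NormedSpace ℝ E] {f : ℝ → E} {T : ℝ}
    (hf : Function.Periodic f T) (h_int : ∀ t₁ t₂, IntervalIntegrable f volume t₁ t₂)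
    {n : ℕ} (hn : n ≠ 0) (t : ℝ) :
    ∫ x in t..t + T, f (n * x) = ∫ x in t..t + T, f x := by
  have hn' : (n : ℝ) ≠ 0 := Nat.cast_ne_zero.2 hn
  rw [integral_comp_mul_left _ hn', mul_add, show (n : ℝ) * T = (n : ℤ) • T by simp,
    hf.intervalIntegral_add_zsmul_eq _ _ h_int, hf.intervalIntegral_add_eq _ t,
    ← Int.cast_smul_eq_zsmul ℝ, smul_smul]
  simp [hn']

theorem integral_cos_nat_mul_neg_pi_pi {m : ℕ} (hm : m ≠ 0) :
    ∫ x in (-π)..π, cos (m * x) = 0 := by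
  have hm' : (m : ℝ) ≠ 0 := Nat.cast_ne_zero.2 hm
  simp [integral_comp_mul_left _ hm', integral_cos, sin_nat_mul_pi]

theorem hasDerivAt_arctan_mul_sin_div {r : ℝ} (hr : |r| < 1) (x : ℝ) :
    HasDerivAt (fun x => arctan (r * sin x / (1 - r * cos x)))
      ((r * cos x - r ^ 2) / (1 - 2 * r * cos x + r ^ 2)) x := by
  have hne : 1 - r * cos x ≠ 0 := by
    have : |r * cos x| < 1 := by
      rw [abs_mul]; nlinarith [abs_cos_le_one x, abs_nonneg r, abs_nonneg (cos x)]
    linarith [le_abs_self (r * cos x)]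
  have hquot : HasDerivAt (fun x => r * sin x / (1 - r * cos x))
      ((r * cos x * (1 - r * cos x) - r * sin x * -(r * -sin x)) / (1 - r * cos x) ^ 2) x :=
    ((hasDerivAt_sin x).const_mul r).div (((hasDerivAt_cos x).const_mul r).const_sub 1) hne
  refine hquot.arctan.congr_deriv ?_
  have hden : 1 - 2 * r * cos x + r ^ 2 = (1 - r * cos x) ^ 2 + (r * sin x) ^ 2 := by
    linear_combination (-r ^ 2) * sin_sq_add_cos_sq x
  rw [hden]
  field_simp
  linear_combination (-r ^ 2) * sin_sq_add_cos_sq x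

section Poisson

variable {c : ℝ}

theorem sub_cos_pos (hc : 1 < c) (x : ℝ) : 0 < c - cos x := by
  linarith [cos_le_one x]

theorem continuous_cos_nat_mul_div_sub_cos (hc : 1 < c) (m : ℕ) :
    Continuous fun x => cos (m * x) / (c - cos x) := by
  fun_prop (disch := exact fun x => (sub_cos_pos hc x).ne')

theorem integral_one_div_sub_cos (hc : 1 < c) :
    ∫ x in (-π)..π, 1 / (c - cos x) = 2 * π / √(c ^ 2 - 1) := by
  set s := √(c ^ 2 - 1)
  have hs2 : s ^ 2 = c ^ 2 - 1 := sq_sqrt (by nlinarith)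
  have hs : 0 < s := sqrt_pos.2 (by nlinarith)
  have hsc : s < c := by nlinarith
  set r := c - s
  have hr : |r| < 1 := abs_lt.2 ⟨by linarith, by nlinarith⟩
  -- continuous on all of ℝ because `|r| < 1`, unlike the antiderivative coming from `tan (x / 2)`
  have hderiv : ∀ x ∈ Set.uIcc (-π) π,
      HasDerivAt (fun x => (x + 2 * arctan (r * sin x / (1 - r * cos x))) / s)
        (1 / (c - cos x)) x := by
    intro x _
    refine (((hasDerivAt_id x).add
      ((hasDerivAt_arctan_mul_sin_div hr x).const_mul 2)).div_const s).congr_deriv ?_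
    have hden : 1 - 2 * r * cos x + r ^ 2 = 2 * r * (c - cos x) := by
      simp only [r]; linear_combination hs2
    have := sub_cos_pos hc x
    have : 0 < r := by linarith
    rw [hden]
    field_simp
    ring
  rw [integral_eq_sub_of_hasDerivAt hderiv (by simpa using
    (continuous_cos_nat_mul_div_sub_cos hc 0).intervalIntegrable (-π) π)]
  simp only [sin_pi, sin_neg, mul_zero, neg_zero, zero_div, arctan_zero]
  ring

theorem integral_cos_nat_mul_div_sub_cos (hc : 1 < c) (m : ℕ) :
    ∫ x in (-π)..π, cos (m * x) / (c - cos x)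
      = (c - √(c ^ 2 - 1)) ^ m * (2 * π / √(c ^ 2 - 1)) := by
  set s := √(c ^ 2 - 1)
  have hs2 : s ^ 2 = c ^ 2 - 1 := sq_sqrt (by nlinarith)
  have hs : 0 < s := sqrt_pos.2 (by nlinarith)
  have hint (m : ℕ) :=
    (continuous_cos_nat_mul_div_sub_cos hc m).intervalIntegrable (μ := volume) (-π) π
  have hI₀ : ∫ x in (-π)..π, cos ((0 : ℕ) * x) / (c - cos x) = 2 * π / s := by
    simpa using integral_one_div_sub_cos hc
  rw [← hI₀]
  refine eq_pow_mul_of_recurrence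
    (u := fun m : ℕ => ∫ x in (-π)..π, cos (m * x) / (c - cos x)) (p := 2 * c)
    (q := -1) (r := c - s) (by linear_combination hs2) ?_ ?_ m
  · have hpointwise (x : ℝ) :
        cos ((1 : ℕ) * x) / (c - cos x) = c * (cos ((0 : ℕ) * x) / (c - cos x)) - 1 := by
      have := (sub_cos_pos hc x).ne'
      rw [Nat.cast_one, one_mul, Nat.cast_zero, zero_mul, cos_zero]
      field_simp
      ring
    simp only [hpointwise]
    rw [integral_sub ((hint 0).const_mul c) intervalIntegrable_const, integral_const_mul, hI₀,
      integral_const, smul_eq_mul, mul_one, sub_neg_eq_add]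
    field_simp
    ring
  · intro m
    have hpointwise (x : ℝ) : cos ((m + 2 : ℕ) * x) / (c - cos x)
        = 2 * c * (cos ((m + 1 : ℕ) * x) / (c - cos x)) + -1 * (cos (m * x) / (c - cos x))
          - 2 * cos ((m + 1 : ℕ) * x) := by
      have := (sub_cos_pos hc x).ne'
      have hcheb :
          cos ((m + 2 : ℕ) * x) + cos (m * x) = 2 * cos x * cos ((m + 1 : ℕ) * x) := by
        rw [show ((m + 2 : ℕ) : ℝ) * x = (m + 1 : ℕ) * x + x by push_cast; ring,
          show (m : ℝ) * x = (m + 1 : ℕ) * x - x by push_cast; ring, cos_add, cos_sub]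
        ring
      generalize cos ((m + 2 : ℕ) * x) = a, cos ((m + 1 : ℕ) * x) = b, cos (m * x) = d
        at hcheb ⊢
      rw [div_eq_iff this]
      field_simp
      linear_combination hcheb
    have hcos : Continuous fun x : ℝ => 2 * cos ((m + 1 : ℕ) * x) := by fun_prop
    simp only [hpointwise]
    rw [integral_sub (((hint _).const_mul _).add ((hint _).const_mul _))
        (hcos.intervalIntegrable _ _),
      integral_add ((hint _).const_mul _) ((hint _).const_mul _), integral_const_mul,
      integral_const_mul, integral_const_mul, integral_cos_nat_mul_neg_pi_pi (by omega)]
    ring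

end Poisson

section SinSq

variable {k : ℝ}

theorem add_sin_sq_pos (hk : 0 < k) (x : ℝ) : 0 < k + sin x ^ 2 := by positivity

theorem integral_cos_nat_mul_div_add_sin_sq_of_odd (hk : 0 < k) {n : ℕ} (hn : Odd n) :
    ∫ x in (-π)..π, cos (n * x) / (k + sin x ^ 2) = 0 := by
  have hanti : Function.Antiperiodic (fun x => cos (n * x) / (k + sin x ^ 2)) π := by
    intro x
    dsimp only
    rw [mul_add, cos_add_nat_mul_pi, hn.neg_one_pow, sin_add_pi, neg_sq, neg_one_mul, neg_div]
  have hcont : Continuous fun x => cos (n * x) / (k + sin x ^ 2) := by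
    fun_prop (disch := exact fun x => (add_sin_sq_pos hk x).ne')
  simpa [show -π + 2 * π = π by ring] using
    hanti.intervalIntegral_add_two_mul_eq_zero (hcont.intervalIntegrable · ·) (-π)

theorem integral_cos_two_mul_nat_mul_div_add_sin_sq (hk : 0 < k) (m : ℕ) :
    ∫ x in (-π)..π, cos ((2 * m : ℕ) * x) / (k + sin x ^ 2)
      = (2 * k + 1 - 2 * √(k * (k + 1))) ^ m * (2 * π / √(k * (k + 1))) := by
  have hc : 1 < 2 * k + 1 := by linarith
  set g : ℝ → ℝ := fun u => 2 * (cos (m * u) / (2 * k + 1 - cos u))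
  have hg : Function.Periodic g (2 * π) := by
    intro u
    simp only [g, mul_add, cos_add_nat_mul_two_pi, cos_add_two_pi]
  have hpointwise (x : ℝ) : cos ((2 * m : ℕ) * x) / (k + sin x ^ 2) = g ((2 : ℕ) * x) := by
    have hden : 2 * k + 1 - cos (2 * x) = 2 * (k + sin x ^ 2) := by
      rw [cos_two_mul, cos_sq']; ring
    have := (add_sin_sq_pos hk x).ne'
    simp only [g, Nat.cast_ofNat, hden]
    rw [show ((2 * m : ℕ) : ℝ) * x = m * (2 * x) by push_cast; ring]
    field_simp
  have hsqrt : √((2 * k + 1) ^ 2 - 1) = 2 * √(k * (k + 1)) := by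
    rw [show (2 * k + 1) ^ 2 - 1 = 2 ^ 2 * (k * (k + 1)) by ring, sqrt_mul (by norm_num),
      sqrt_sq (by norm_num)]
  have hhalve := hg.intervalIntegral_comp_nat_mul
    ((continuous_const.mul (continuous_cos_nat_mul_div_sub_cos hc m)).intervalIntegrable · ·)
    two_ne_zero (-π)
  rw [show -π + 2 * π = π by ring] at hhalve
  simp only [hpointwise, hhalve, g, integral_const_mul, integral_cos_nat_mul_div_sub_cos hc, hsqrt]
  field_simp

end SinSq

theorem exp_two_mul_arsinh_sqrt {k : ℝ} (hk : 0 ≤ k) :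
    exp (2 * arsinh √k) = 2 * k + 1 + 2 * √(k * (k + 1)) := by
  rw [mul_comm, exp_mul, exp_arsinh, sq_sqrt hk, add_comm 1 k, rpow_two, add_sq,
    sq_sqrt hk, sq_sqrt (by linarith), mul_assoc, ← sqrt_mul hk]
  ring

theorem exp_neg_two_mul_arsinh_sqrt {k : ℝ} (hk : 0 ≤ k) :
    exp (-(2 * arsinh √k)) = 2 * k + 1 - 2 * √(k * (k + 1)) := by
  have hs : √(k * (k + 1)) ^ 2 = k * (k + 1) := sq_sqrt (by positivity)
  rw [exp_neg, exp_two_mul_arsinh_sqrt hk, inv_eq_of_mul_eq_one_right]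
  linear_combination (-4) * hs

theorem cosh_two_mul_nat_mul_arsinh_sqrt {k : ℝ} (hk : 0 ≤ k) (m : ℕ) :
    cosh (2 * m * arsinh √k)
      = ((2 * k + 1 + 2 * √(k * (k + 1))) ^ m + (2 * k + 1 - 2 * √(k * (k + 1))) ^ m) / 2 := by
  rw [cosh_eq, show 2 * m * arsinh √k = m * (2 * arsinh √k) by ring, ← mul_neg, exp_nat_mul,
    exp_nat_mul, exp_two_mul_arsinh_sqrt hk, exp_neg_two_mul_arsinh_sqrt hk]

theorem stmt_11_general (k : ℝ) (hk : 0 < k) (n : ℕ) :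
    ∫ x in (-π)..π, Real.cos (n * x) / (k + Real.sin x ^ 2)
      = ((-1 : ℝ) ^ n + 1) / 2 * π *
          (-(((2 * k + 1 + 2 * Real.sqrt (k * (k + 1))) ^ (n / 2)
                - (2 * k + 1 - 2 * Real.sqrt (k * (k + 1))) ^ (n / 2))
              / Real.sqrt (k * (k + 1)))
            + Real.cosh (2 * (n / 2 : ℕ) * Real.arsinh (Real.sqrt k))
                * 2 / Real.sqrt (k * (k + 1))) := by
  rcases Nat.even_or_odd' n with ⟨m, rfl | rfl⟩
  · have hs : 0 < √(k * (k + 1)) := sqrt_pos.2 (by positivity)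
    rw [integral_cos_two_mul_nat_mul_div_add_sin_sq hk, Nat.mul_div_cancel_left m two_pos,
      cosh_two_mul_nat_mul_arsinh_sqrt hk.le, pow_mul, neg_one_sq, one_pow]
    field_simp
    ring
  · rw [integral_cos_nat_mul_div_add_sin_sq_of_odd hk (odd_two_mul_add_one m),
      (odd_two_mul_add_one m).neg_one_pow]
    simp

theorem stmt_11 (k : ℝ) (hk : 0 < k) (n : ℕ) (hn : 1 ≤ n) :
    ∫ x in (-π)..π, Real.cos (n * x) / (k + Real.sin x ^ 2)
      = ((-1 : ℝ) ^ n + 1) / 2 * π *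
          (-(((2 * k + 1 + 2 * Real.sqrt (k * (k + 1))) ^ (n / 2)
                - (2 * k + 1 - 2 * Real.sqrt (k * (k + 1))) ^ (n / 2))
              / Real.sqrt (k * (k + 1)))
            + Real.cosh (2 * (n / 2 : ℕ) * Real.arsinh (Real.sqrt k))
                * 2 / Real.sqrt (k * (k + 1))) :=
  stmt_11_general k hk n
end

section
/- The integral over [-π, π] of Log(sin x + cos x) with respect to x (Log denoting the principal complex logarithm, applied to sin x + cos x viewed as a complex number) equals π·(iπ − ln 2); equivalently, the zeroth Fourier coefficient of x ↦ Log(sin x + cos x) is i(π + i·ln 2)/2. -/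
/-!
Since `sin x + cos x = √2 sin (x + π/4)` and the integrand is `2π`-periodic, the integral equals
`∫_{-π}^{π} Log (√2 sin y) dy`. Folding `[-π, 0]` onto `[0, π]` pairs `Log r` with `Log (-r)`
for `r = √2 sin y > 0`, and `Log r + Log (-r) = 2 log r + iπ`. Hence the integral is
`π log 2 + 2 ∫_0^π log (sin y) dy + iπ² = -π log 2 + iπ²`.
-/

open Real MeasureTheory
open scoped Interval

namespace Complex

lemma norm_log_ofReal_le (r : ℝ) : ‖log (r : ℂ)‖ ≤ |Real.log r| + π := by
  calc ‖log (r : ℂ)‖ ≤ |(log (r : ℂ)).re| + |(log (r : ℂ)).im| :=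
        norm_le_abs_re_add_abs_im _
    _ ≤ |Real.log r| + π := by
      rw [log_re, log_im, norm_real, Real.norm_eq_abs, Real.log_abs]
      gcongr
      exact abs_arg_le_pi _

lemma arg_ofReal_neg_add_arg_ofReal {r : ℝ} (hr : r ≠ 0) :
    arg ((-r : ℝ) : ℂ) + arg (r : ℂ) = π := by
  rcases hr.lt_or_gt with hr | hr
  · rw [arg_ofReal_of_nonneg (by linarith), arg_ofReal_of_neg hr, zero_add]
  · rw [arg_ofReal_of_neg (by linarith), arg_ofReal_of_nonneg hr.le, add_zero]

lemma log_ofReal_neg_add_log_ofReal {r : ℝ} (hr : r ≠ 0) :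
    log ((-r : ℝ) : ℂ) + log (r : ℂ) = 2 * Real.log r + π * I := by
  have harg : (arg ((-r : ℝ) : ℂ) : ℂ) + arg (r : ℂ) = π := by
    exact_mod_cast arg_ofReal_neg_add_arg_ofReal hr
  simp only [log, norm_real, Real.norm_eq_abs, abs_neg, Real.log_abs]
  linear_combination I * harg

end Complex

lemma IntervalIntegrable.ofReal {f : ℝ → ℝ} {a b : ℝ} {μ : Measure ℝ}
    (hf : IntervalIntegrable f μ a b) : IntervalIntegrable (fun x ↦ (f x : ℂ)) μ a b :=
  ⟨hf.1.ofReal, hf.2.ofReal⟩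

lemma IntervalIntegrable.log_ofReal {f : ℝ → ℝ} {a b : ℝ} (hf : Measurable f)
    (hlog : IntervalIntegrable (Real.log ∘ f) volume a b) :
    IntervalIntegrable (fun x ↦ Complex.log (f x)) volume a b :=
  (hlog.abs.add intervalIntegrable_const).mono_fun'
    (Complex.measurable_log.comp (Complex.measurable_ofReal.comp hf)).aestronglyMeasurable
    (ae_of_all _ fun x ↦ Complex.norm_log_ofReal_le (f x))

lemma sin_add_cos_eq_sqrt_two_mul_sin (x : ℝ) : sin x + cos x = √2 * sin (x + π / 4) := by
  rw [sin_add, cos_pi_div_four, sin_pi_div_four]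
  have : √2 * √2 = 2 := Real.mul_self_sqrt zero_le_two
  linear_combination -(sin x + cos x) / 2 * this

lemma intervalIntegrable_log_ofReal_mul_sin (c : ℝ) {a b : ℝ} :
    IntervalIntegrable (fun y ↦ Complex.log ((c * sin y : ℝ) : ℂ)) volume a b :=
  IntervalIntegrable.log_ofReal (by fun_prop)
    (analyticOnNhd_const.mul analyticOnNhd_sin).meromorphicOn.intervalIntegrable_log

lemma intervalIntegral.integral_symm_eq_integral_comp_neg_add {E : Type*} [NormedAddCommGroup E]
    [NormedSpace ℝ E] {f : ℝ → E} {a : ℝ} (hneg : IntervalIntegrable f volume (-a) 0)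
    (hpos : IntervalIntegrable f volume 0 a) :
    ∫ x in -a..a, f x = ∫ x in 0..a, (f (-x) + f x) := by
  have hneg' : IntervalIntegrable (fun x ↦ f (-x)) volume 0 a := by
    simpa using ((IntervalIntegrable.iff_comp_neg).mp hneg).symm
  rw [intervalIntegral.integral_add hneg' hpos, intervalIntegral.integral_comp_neg, neg_zero,
    intervalIntegral.integral_add_adjacent_intervals hneg hpos]

lemma integral_log_ofReal_mul_sin {c : ℝ} (hc : c ≠ 0) (t : ℝ) :
    ∫ y in t..t + 2 * π, Complex.log ((c * sin y : ℝ) : ℂ)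
      = 2 * π * (Real.log c - Real.log 2 : ℝ) + π ^ 2 * Complex.I := by
  set h : ℝ → ℂ := fun y ↦ Complex.log ((c * sin y : ℝ) : ℂ)
  have hper : Function.Periodic h (2 * π) := fun y ↦ by simp only [h, sin_add_two_pi]
  have hfold : ∀ᵐ y, y ∈ Ι 0 π →
      h (-y) + h y = ((2 * (Real.log c + Real.log (sin y)) : ℝ) : ℂ) + π * Complex.I := by
    filter_upwards [Measure.ae_ne volume π] with y hyπ hy
    rw [Set.uIoc_of_le pi_pos.le] at hy
    have hsin : sin y ≠ 0 := (sin_pos_of_pos_of_lt_pi hy.1 (hy.2.lt_of_ne hyπ)).ne'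
    simp only [h, sin_neg, mul_neg, Complex.log_ofReal_neg_add_log_ofReal (mul_ne_zero hc hsin),
      Real.log_mul hc hsin]
    push_cast
    ring
  have hlog_int : IntervalIntegrable (fun y ↦ 2 * (Real.log c + Real.log (sin y))) volume 0 π :=
    (intervalIntegrable_const.add intervalIntegrable_log_sin).const_mul 2
  have hlog : ∫ y in (0 : ℝ)..π, 2 * (Real.log c + Real.log (sin y))
      = 2 * π * (Real.log c - Real.log 2) := by
    rw [intervalIntegral.integral_const_mul, intervalIntegral.integral_add
        (g := fun y ↦ Real.log (sin y)) intervalIntegrable_const intervalIntegrable_log_sin,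
      intervalIntegral.integral_const, integral_log_sin_zero_pi, sub_zero, smul_eq_mul]
    ring
  calc ∫ y in t..t + 2 * π, h y = ∫ y in -π..π, h y := by
        rw [hper.intervalIntegral_add_eq t (-π)]; ring_nf
    _ = ∫ y in 0..π, (h (-y) + h y) :=
        intervalIntegral.integral_symm_eq_integral_comp_neg_add
          (intervalIntegrable_log_ofReal_mul_sin c) (intervalIntegrable_log_ofReal_mul_sin c)
    _ = ∫ y in 0..π, (((2 * (Real.log c + Real.log (sin y)) : ℝ) : ℂ) + π * Complex.I) :=
        intervalIntegral.integral_congr_ae hfold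
    _ = 2 * π * (Real.log c - Real.log 2 : ℝ) + π ^ 2 * Complex.I := by
        rw [intervalIntegral.integral_add hlog_int.ofReal intervalIntegrable_const,
          intervalIntegral.integral_ofReal, hlog, intervalIntegral.integral_const, sub_zero,
          Complex.real_smul]
        push_cast
        ring

theorem stmt_14 :
    ∫ x in (-π)..π, Complex.log ((Real.sin x + Real.cos x : ℝ) : ℂ)
      = (π : ℂ) * (Complex.I * (π : ℂ) - (Real.log 2 : ℂ)) := by
  simp_rw [sin_add_cos_eq_sqrt_two_mul_sin]
  rw [intervalIntegral.integral_comp_add_right (fun y ↦ Complex.log ((√2 * sin y : ℝ) : ℂ)),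
    show π + π / 4 = -π + π / 4 + 2 * π by ring, integral_log_ofReal_mul_sin (by positivity),
    Real.log_sqrt zero_le_two]
  push_cast
  ring
end
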